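/- arXiv:2101.03364 — 2 statements merged into one kernel-verified Lean document; each statement's English description precedes it below -/
import Mathlib

section
/- For every n ≥ 4, the threshold graphs G₁ and G₂ with binary strings b₁ = 0^{n−2}1² and b₂ = 010^{n−3}1 are Seidel cospectral: their Seidel matrices have equal characteristic polynomials. -/
open Polynomial Matrix

theorem stmt_17 (n : ℕ) (hn : 4 ≤ n)
    (β₁ β₂ : ℕ → ℝ)
    (hβ₁ : ∀ j, 1 ≤ j → j ≤ n → β₁ j = if j ≤ n - 2 then 1 else -1)
    (hβ₂ : ∀ j, 1 ≤ j → j ≤ n → β₂ j = if j = 2 ∨ j = n then -1 else 1)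
    (S₁ S₂ : Matrix (Fin n) (Fin n) ℝ)
    (hS₁ : ∀ i j : Fin n, S₁ i j = if i = j then 0 else β₁ (max (i : ℕ) (j : ℕ) + 1))
    (hS₂ : ∀ i j : Fin n, S₂ i j = if i = j then 0 else β₂ (max (i : ℕ) (j : ℕ) + 1)) :
    S₁.charpoly = S₂.charpoly := by
  set ε : Fin n → ℝ := fun i => if (i : ℕ) ≤ 1 ∨ (i : ℕ) = n - 1 then -1 else 1 with hε
  set E : Matrix (Fin n) (Fin n) ℝ :=
    Matrix.of (fun i j => if j = i.rev then ε i else 0) with hE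
  have hε2 : ∀ i, ε i * ε i = 1 := by
    intro i; rw [hε]; dsimp only; split_ifs <;> norm_num
  have hEE : E * Eᵀ = 1 := by
    ext i k
    simp only [Matrix.mul_apply, hE, Matrix.transpose_apply, Matrix.of_apply,
      ite_mul, mul_ite, zero_mul, mul_zero]
    rw [Finset.sum_eq_single i.rev]
    · by_cases h : i = k
      · subst h; simp [hε2, Matrix.one_apply]
      · have : i.rev ≠ k.rev := fun hc => h (Fin.rev_injective hc)
        simp [this.symm, Matrix.one_apply, h]
    · intro b _ hb
      simp [hb]
    · simp
  have key : S₂ = E * S₁ * Eᵀ := by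
    ext i j
    have hcalc : (E * S₁ * Eᵀ) i j = ε i * S₁ i.rev j.rev * ε j := by
      simp only [Matrix.mul_apply, hE, Matrix.transpose_apply, Matrix.of_apply,
        ite_mul, mul_ite, zero_mul, mul_zero, Finset.sum_ite_eq' Finset.univ,
        Finset.mem_univ, if_true]
      try ring
    rw [hcalc]
    by_cases hij : i = j
    · subst hij
      rw [hS₂, hS₁]
      simp
    · have hrev : i.rev ≠ j.rev := fun hc => hij (Fin.rev_injective hc)
      have hi : (i : ℕ) < n := i.isLt
      have hj : (j : ℕ) < n := j.isLt
      have hri : (i.rev : ℕ) = n - 1 - (i : ℕ) := by rw [Fin.val_rev]; omega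
      have hrj : (j.rev : ℕ) = n - 1 - (j : ℕ) := by rw [Fin.val_rev]; omega
      rw [hS₂, hS₁, if_neg hij, if_neg hrev,
        hβ₂ _ (by omega) (by omega), hβ₁ _ (by omega) (by omega), hri, hrj, hε]
      have hijv : (i : ℕ) ≠ (j : ℕ) := fun hc => hij (Fin.ext hc)
      dsimp only
      rcases le_total (i : ℕ) (j : ℕ) with h | h
      · rw [max_eq_right h, max_eq_left (Nat.sub_le_sub_left h (n - 1))]
        split_ifs <;> (try norm_num) <;> omega
      · rw [max_eq_left h, max_eq_right (Nat.sub_le_sub_left h (n - 1))]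
        split_ifs <;> (try norm_num) <;> omega
  have h1 : (E.map (C : ℝ →+* ℝ[X])) * (Eᵀ.map C) = 1 := by
    have := congrArg (fun M => M.map (C : ℝ →+* ℝ[X])) hEE
    simpa [Matrix.map_mul] using this
  have hsc : (E.map (C : ℝ →+* ℝ[X])) * (Matrix.scalar (Fin n) (X : ℝ[X])) * (Eᵀ.map C)
      = Matrix.scalar (Fin n) (X : ℝ[X]) := by
    have hc := (Matrix.scalar_commute (X : ℝ[X]) (fun r' => Commute.all _ _) (E.map C)).eq
    rw [← hc, Matrix.mul_assoc, h1, Matrix.mul_one]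
  have hFE : (charmatrix S₂) = (E.map C) * (charmatrix S₁) * (Eᵀ.map C) := by
    rw [key]
    have hmm : ((E * S₁ * Eᵀ).map (C : ℝ →+* ℝ[X])) = (E.map C) * (S₁.map C) * (Eᵀ.map C) := by
      simp [Matrix.map_mul]
    rw [charmatrix, charmatrix, RingHom.mapMatrix_apply, RingHom.mapMatrix_apply, hmm,
      Matrix.mul_sub, Matrix.sub_mul]
    congr 1
    exact hsc.symm
  have hdet : det (charmatrix S₂) = det (charmatrix S₁) := by
    rw [hFE, Matrix.det_mul, Matrix.det_mul]
    have h2 : (E.map (C : ℝ →+* ℝ[X])).det * (Eᵀ.map C).det = 1 := by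
      rw [← Matrix.det_mul, h1, Matrix.det_one]
    calc (E.map (C : ℝ →+* ℝ[X])).det * (charmatrix S₁).det * (Eᵀ.map C).det
        = ((E.map C).det * (Eᵀ.map C).det) * (charmatrix S₁).det := by ring
      _ = (charmatrix S₁).det := by rw [h2, one_mul]
  rw [Matrix.charpoly, Matrix.charpoly, hdet]
end

section
/- For every n ≥ 3, the characteristic polynomial of the Seidel matrix S of the threshold graph with binary string 0^{n−2}1² equals (x + 1)^{n−3}·(x − 1)·(x² + (4 − n)x + (7 − 3n)). -/
/-!
`S + 1` is constant on the blocks of the vertex partition `{1, …, n-2}, {n-1}, {n}`, so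
`S + 1 = P σ Pᵀ` with `P` the `n × 3` block-indicator matrix and `σ = 2 - J` the `3 × 3` sign
matrix. As `χ(AB) = X^(n-3) χ(BA)` for `A` of size `n × 3` and `B` of size `3 × n`, `χ(S + 1)`
is `X^(n-3)` times the characteristic polynomial of the quotient matrix
`σ Pᵀ P = σ · diag(n-2, 1, 1)`, namely `(X - 2)(X² - (n-2)X - 2(n-2))`; substituting `X + 1`
for `X` gives the result.
-/

open Polynomial Matrix Finset

namespace Matrix

variable {m k : Type*} (R : Type*) [DecidableEq k]

def indicatorMatrix [Zero R] [One R] (p : m → k) : Matrix m k R :=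
  of fun i a => if p i = a then 1 else 0

variable {R}

theorem indicatorMatrix_mul_mul_transpose [Fintype k] [NonAssocSemiring R] (p : m → k)
    (σ : Matrix k k R) : indicatorMatrix R p * σ * (indicatorMatrix R p)ᵀ = σ.submatrix p p := by
  ext i j
  simp [indicatorMatrix, mul_apply]

theorem transpose_indicatorMatrix_mul [Fintype m] [NonAssocSemiring R] (p : m → k) :
    (indicatorMatrix R p)ᵀ * indicatorMatrix R p = diagonal fun a => (#{i | p i = a} : R) := by
  ext a b
  by_cases hab : a = b
  · subst hab
    simp [indicatorMatrix, mul_apply, Finset.sum_ite, Finset.filter_filter]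
  · rw [mul_apply, diagonal_apply_ne _ hab]
    refine Finset.sum_eq_zero fun i _ => ?_
    simp only [indicatorMatrix, transpose_apply, of_apply]
    split_ifs <;> simp_all

theorem charpoly_submatrix_of_card_le [Fintype m] [DecidableEq m] [Fintype k] [CommRing R]
    (σ : Matrix k k R) (p : m → k) (h : Fintype.card k ≤ Fintype.card m) :
    (σ.submatrix p p).charpoly = X ^ (Fintype.card m - Fintype.card k) *
      (σ * diagonal fun a => (#{i | p i = a} : R)).charpoly := by
  rw [← indicatorMatrix_mul_mul_transpose, Matrix.mul_assoc, charpoly_mul_comm_of_le _ _ h,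
    Matrix.mul_assoc, transpose_indicatorMatrix_mul]

theorem charpoly_sub_one [Fintype m] [DecidableEq m] [CommRing R] (M : Matrix m m R) :
    (M - 1).charpoly = M.charpoly.comp (X + 1) := by
  simpa using charpoly_sub_scalar M 1

end Matrix

theorem charpoly_signMatrix_mul_diagonal {R : Type*} [CommRing R] (c : R) :
    ((of fun a b : Fin 3 => if a = b then (1 : R) else -1) * diagonal ![c, 1, 1]).charpoly =
      (X - 2) * (X ^ 2 - C c * X - 2 * C c) := by
  rw [charpoly, det_fin_three]
  simp only [Nat.succ_eq_add_one, Nat.reduceAdd, Fin.isValue, charmatrix_apply_eq, mul_apply,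
    of_apply, ite_mul, one_mul, neg_mul, Fin.sum_univ_three, ↓reduceIte, diagonal_apply_eq,
    cons_val_zero, zero_ne_one, ne_eq, one_ne_zero, not_false_eq_true, diagonal_apply_ne,
    neg_zero, add_zero, Fin.reduceEq, cons_val_one, zero_add, map_one, Matrix.cons_val,
    charmatrix_apply_ne, map_neg, neg_neg, mul_one]
  ring

/-- The blocks `{1, …, n-2}, {n-1}, {n}` of the paper's vertices, indexed here from `0`. -/
def vertexClass (n : ℕ) (i : Fin n) : Fin 3 :=
  if (i : ℕ) < n - 2 then 0 else if (i : ℕ) = n - 2 then 1 else 2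

theorem vertexClass_eq_iff {n : ℕ} {i j : Fin n} (hij : i ≠ j) :
    vertexClass n i = vertexClass n j ↔ max (i : ℕ) j + 1 ≤ n - 2 := by
  unfold vertexClass
  grind

theorem card_filter_vertexClass_eq_zero (n : ℕ) : #{i | vertexClass n i = 0} = n - 2 := by
  have hclass (i : Fin n) : vertexClass n i = 0 ↔ (i : ℕ) < n - 2 := by
    unfold vertexClass
    grind
  simp_rw [hclass, Fin.card_filter_val_lt]
  omega

theorem filter_vertexClass_eq_one {n : ℕ} (hn : 2 ≤ n) :
    ({i | vertexClass n i = 1} : Finset (Fin n)) = {⟨n - 2, by omega⟩} := by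
  ext i
  simp only [vertexClass, mem_filter, mem_univ, true_and, mem_singleton, Fin.ext_iff]
  grind

theorem filter_vertexClass_eq_two {n : ℕ} (hn : 2 ≤ n) :
    ({i | vertexClass n i = 2} : Finset (Fin n)) = {⟨n - 1, by omega⟩} := by
  ext i
  simp only [vertexClass, mem_filter, mem_univ, true_and, mem_singleton, Fin.ext_iff]
  grind

theorem card_filter_vertexClass (n : ℕ) (hn : 2 ≤ n) :
    (fun a => (#{i | vertexClass n i = a} : ℝ)) = ![(n : ℝ) - 2, 1, 1] := by
  funext a
  fin_cases a
  · simp [card_filter_vertexClass_eq_zero, hn]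
  · simp [filter_vertexClass_eq_one hn]
  · simp [filter_vertexClass_eq_two hn]

theorem seidel_eq_submatrix_vertexClass_sub_one {n : ℕ} {β : ℕ → ℝ}
    (hβ : ∀ j, 1 ≤ j → j ≤ n → β j = if j ≤ n - 2 then 1 else -1)
    {S : Matrix (Fin n) (Fin n) ℝ}
    (hS : ∀ i j : Fin n, S i j = if i = j then 0 else β (max (i : ℕ) (j : ℕ) + 1)) :
    S = (of fun a b : Fin 3 => if a = b then (1 : ℝ) else -1).submatrix
      (vertexClass n) (vertexClass n) - 1 := by
  ext i j
  rw [hS, Matrix.sub_apply, submatrix_apply, of_apply, one_apply]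
  by_cases hij : i = j
  · simp [hij]
  · rw [hβ _ (by omega) (by omega)]
    simp [hij, vertexClass_eq_iff hij]

theorem stmt_18 (n : ℕ) (hn : 3 ≤ n)
    (β : ℕ → ℝ)
    (hβ : ∀ j, 1 ≤ j → j ≤ n → β j = if j ≤ n - 2 then 1 else -1)
    (S : Matrix (Fin n) (Fin n) ℝ)
    (hS : ∀ i j : Fin n, S i j = if i = j then 0 else β (max (i : ℕ) (j : ℕ) + 1)) :
    S.charpoly = (X + 1) ^ (n - 3) * (X - 1) *
      (X ^ 2 + C (4 - (n : ℝ)) * X + C (7 - 3 * (n : ℝ))) := by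
  rw [seidel_eq_submatrix_vertexClass_sub_one hβ hS, charpoly_sub_one,
    charpoly_submatrix_of_card_le _ _ (by simpa using hn), card_filter_vertexClass n (by omega),
    charpoly_signMatrix_mul_diagonal]
  simp only [Fintype.card_fin, mul_comp, pow_comp, X_comp, sub_comp, ofNat_comp, natCast_comp,
    map_sub, map_mul, map_ofNat, map_natCast]
  ring
end
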